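/- From the Bailey transform with conjugate pair γ_L = a^L q^{L²}/(aq;q)_∞, δ_L = a^L q^{L²} applied to the Bailey pair α_0=1, α_L = (-1)^L q^{L(3L-1)/2}(1+q^L), β_L = 1/(q;q)_L (relative to 1): (1/(q;q)_∞) Σ_{L=-∞}^∞ (-1)^L q^{L(5L-1)/2} = Σ_{n=0}^∞ q^{n²}/(q;q)_n. -/

import Mathlib

/-- Finite q-shifted factorial `(q;q)_n`. -/
noncomputable def qp (q : ℂ) (n : ℕ) : ℂ := ∏ k ∈ Finset.range n, (1 - q ^ (k + 1))

/-- Infinite q-shifted factorial `(q;q)_∞`. -/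
noncomputable def qpinf (q : ℂ) : ℂ := ∏' k : ℕ, (1 - q ^ (k + 1))

/-!
Schur's proof. The polynomials `E n = ∑ₖ q^(k²) [n-k, k]` and
`D n = ∑_L (-1)^L q^(L(5L-1)/2) [n, ⌊(n+5L)/2⌋]` both satisfy `X (n+2) = X (n+1) + q^(n+1) X n`
with `X 0 = X 1 = 1`: for `E` this is one `q`-Pascal step, for `D` the `q`-Pascal rules make each
term of the recurrence telescope in `L`. Hence `E = D`. For `‖q‖ < 1` the Gaussian binomials are
uniformly bounded and converge termwise (`[n-k, k] → 1/(q;q)_k`, `[n, ⌊(n+5L)/2⌋] → 1/(q;q)_∞`), so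
dominated convergence turns `E n = D n` into the identity as `n → ∞`.
-/

open Filter Topology

variable {q : ℂ}

lemma qp_zero : qp q 0 = 1 := Finset.prod_range_zero _

lemma qp_succ (n : ℕ) : qp q (n + 1) = qp q n * (1 - q ^ (n + 1)) :=
  Finset.prod_range_succ _ n

lemma summable_norm_pow_succ (hq : ‖q‖ < 1) : Summable fun k : ℕ ↦ ‖-q ^ (k + 1)‖ := by
  simpa [norm_pow, pow_succ] using
    (summable_geometric_of_lt_one (norm_nonneg q) hq).mul_right ‖q‖

lemma one_sub_pow_succ_ne_zero (hq : ‖q‖ < 1) (k : ℕ) : 1 - q ^ (k + 1) ≠ 0 := by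
  refine sub_ne_zero.2 fun h ↦ ?_
  have : ‖q‖ ^ (k + 1) < 1 := pow_lt_one₀ (norm_nonneg q) hq k.succ_ne_zero
  rw [← norm_pow, ← h, norm_one] at this
  exact this.false

lemma qp_ne_zero (hq : ‖q‖ < 1) (n : ℕ) : qp q n ≠ 0 :=
  Finset.prod_ne_zero_iff.2 fun k _ ↦ one_sub_pow_succ_ne_zero hq k

lemma tendsto_qp (hq : ‖q‖ < 1) : Tendsto (qp q) atTop (𝓝 (qpinf q)) := by
  have := (multipliable_one_add_of_summable (summable_norm_pow_succ hq)).hasProd.tendsto_prod_nat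
  simp only [← sub_eq_add_neg] at this
  exact this

lemma qpinf_ne_zero (hq : ‖q‖ < 1) : qpinf q ≠ 0 := by
  have := tprod_one_add_ne_zero_of_summable
    (fun k ↦ by simpa only [← sub_eq_add_neg] using one_sub_pow_succ_ne_zero hq k)
    (summable_norm_pow_succ hq)
  simpa only [qpinf, ← sub_eq_add_neg] using this

lemma exists_norm_qp_le (hq : ‖q‖ < 1) : ∃ C, ∀ n, ‖qp q n‖ ≤ C ∧ ‖(qp q n)⁻¹‖ ≤ C := by
  obtain ⟨C₁, hC₁⟩ := isBounded_iff_forall_norm_le.1 <|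
    Metric.isBounded_range_of_tendsto _ (tendsto_qp hq)
  obtain ⟨C₂, hC₂⟩ := isBounded_iff_forall_norm_le.1 <|
    Metric.isBounded_range_of_tendsto _ ((tendsto_qp hq).inv₀ (qpinf_ne_zero hq))
  exact ⟨max C₁ C₂, fun n ↦ ⟨(hC₁ _ ⟨n, rfl⟩).trans (le_max_left _ _),
    (hC₂ _ ⟨n, rfl⟩).trans (le_max_right _ _)⟩⟩

noncomputable def qBinom (q : ℂ) (N : ℕ) (m : ℤ) : ℂ :=
  if 0 ≤ m ∧ m ≤ N then qp q N / (qp q m.toNat * qp q (N - m.toNat)) else 0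

lemma qBinom_of_neg {N : ℕ} {m : ℤ} (h : m < 0) : qBinom q N m = 0 :=
  if_neg (by omega)

lemma qBinom_of_lt {N : ℕ} {m : ℤ} (h : (N : ℤ) < m) : qBinom q N m = 0 :=
  if_neg (by omega)

lemma qBinom_add (k r : ℕ) : qBinom q (k + r) k = qp q (k + r) / (qp q k * qp q r) := by
  rw [qBinom, if_pos (by omega), Int.toNat_natCast, Nat.add_sub_cancel_left]

lemma qBinom_symm (N : ℕ) (m : ℤ) : qBinom q N (N - m) = qBinom q N m := by
  by_cases hm : 0 ≤ m ∧ m ≤ N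
  · rw [qBinom, qBinom, if_pos (by omega), if_pos hm, mul_comm]
    congr 4 <;> omega
  · rw [qBinom, qBinom, if_neg (by omega), if_neg hm]

lemma qBinom_zero_right (hq : ∀ n, qp q n ≠ 0) (N : ℕ) : qBinom q N 0 = 1 := by
  simpa [qp_zero, hq N] using qBinom_add (q := q) 0 N

lemma qBinom_self (hq : ∀ n, qp q n ≠ 0) (N : ℕ) : qBinom q N N = 1 := by
  simpa [qp_zero, hq N] using qBinom_add (q := q) N 0

/-- The exponent is truncated to `ℕ`, harmlessly: `qBinom q N (m - 1) = 0` whenever `N + 1 < m`. -/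
lemma qBinom_succ (hq : ∀ n, qp q n ≠ 0) (N : ℕ) (m : ℤ) :
    qBinom q (N + 1) m = qBinom q N m + q ^ (N + 1 - m).toNat * qBinom q N (m - 1) := by
  rcases lt_trichotomy m 0 with hm | rfl | hm
  · simp [qBinom_of_neg hm, qBinom_of_neg (show m - 1 < 0 by omega)]
  · simp [qBinom_zero_right hq, qBinom_of_neg (show (-1 : ℤ) < 0 by omega)]
  obtain ⟨k, rfl⟩ : ∃ k : ℕ, m = k + 1 := ⟨m.toNat - 1, by omega⟩
  rcases lt_trichotomy (k + 1) (N + 1) with hk | hk | hk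
  · obtain ⟨r, rfl⟩ : ∃ r, N = k + 1 + r := ⟨N - (k + 1), by omega⟩
    have h₁ := qBinom_add (q := q) (k + 1) (r + 1)
    have h₂ := qBinom_add (q := q) (k + 1) r
    have h₃ := qBinom_add (q := q) k (r + 1)
    push_cast at h₁ h₂ h₃
    rw [show k + 1 + r + 1 = k + 1 + (r + 1) by ring, h₁, h₂,
      show k + 1 + r = k + (r + 1) by ring, add_sub_cancel_right, h₃,
      show ((k + (r + 1) : ℕ) + 1 - (k + 1) : ℤ).toNat = r + 1 by omega]
    have hN : qp q (k + 1 + (r + 1)) = qp q (k + (r + 1)) * (1 - q ^ (k + 1) * q ^ (r + 1)) := by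
      rw [show k + 1 + (r + 1) = k + (r + 1) + 1 by ring, qp_succ]
      ring
    obtain ⟨-, hk⟩ := mul_ne_zero_iff.1 (qp_succ (q := q) k ▸ hq (k + 1))
    obtain ⟨-, hr⟩ := mul_ne_zero_iff.1 (qp_succ (q := q) r ▸ hq (r + 1))
    have := hq k
    have := hq r
    rw [hN, qp_succ k, qp_succ r]
    field_simp
    ring
  · obtain rfl : k = N := by omega
    have := qBinom_self hq (k + 1)
    push_cast at this
    simp [this, qBinom_self hq, qBinom_of_lt (show (k : ℤ) < k + 1 by omega)]
  · rw [qBinom_of_lt (by omega), qBinom_of_lt (by omega), qBinom_of_lt (by omega), mul_zero,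
      add_zero]

lemma qBinom_succ' (hq : ∀ n, qp q n ≠ 0) (N : ℕ) (m : ℤ) :
    qBinom q (N + 1) m = q ^ m.toNat * qBinom q N m + qBinom q N (m - 1) := by
  rw [← qBinom_symm, qBinom_succ hq, ← qBinom_symm N (m - 1), ← qBinom_symm N m]
  push_cast
  rw [add_comm, sub_sub_cancel, sub_sub, add_sub_add_right_eq_sub, sub_sub_eq_add_sub]

lemma pow_mul_qBinom_congr {N : ℕ} {m : ℤ} {a b : ℕ} (h : 0 ≤ m → m ≤ N → a = b) :
    q ^ a * qBinom q N m = q ^ b * qBinom q N m := by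
  by_cases hm : 0 ≤ m ∧ m ≤ N
  · rw [h hm.1 hm.2]
  · rw [qBinom, if_neg hm, mul_zero, mul_zero]

lemma qBinom_add_two (hq : ∀ n, qp q n ≠ 0) (N : ℕ) (m : ℤ) :
    qBinom q (N + 2) (m + 1) =
      qBinom q (N + 1) m + q ^ (m + 1).toNat * qBinom q N (m + 1) + q ^ (N + 1) * qBinom q N m := by
  have h₁ := qBinom_succ' hq (N + 1) (m + 1)
  have h₂ := qBinom_succ hq N (m + 1)
  rw [add_sub_cancel_right] at h₁ h₂
  rw [h₁, h₂, mul_add, ← mul_assoc, ← pow_add,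
    pow_mul_qBinom_congr (a := (m + 1).toNat + (N + 1 - (m + 1)).toNat) (b := N + 1) (by omega)]
  ring

lemma qBinom_add_two' (hq : ∀ n, qp q n ≠ 0) (N : ℕ) (m : ℤ) :
    qBinom q (N + 2) (m + 1) =
      qBinom q (N + 1) (m + 1) + q ^ (N + 1) * qBinom q N m +
        q ^ (N + 1 - m).toNat * qBinom q N (m - 1) := by
  have h₁ := qBinom_succ hq (N + 1) (m + 1)
  have h₂ := qBinom_succ' hq N m
  rw [add_sub_cancel_right, show ((N + 1 : ℕ) : ℤ) + 1 - (m + 1) = N + 1 - m by push_cast; ring]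
    at h₁
  rw [h₁, h₂, mul_add, ← mul_assoc, ← pow_add,
    pow_mul_qBinom_congr (a := (N + 1 - m).toNat + m.toNat) (b := N + 1) (by omega)]
  ring

lemma exists_norm_qBinom_le (hq : ‖q‖ < 1) : ∃ B, ∀ N m, ‖qBinom q N m‖ ≤ B := by
  obtain ⟨C, hC⟩ := exists_norm_qp_le hq
  have hC₀ : 0 ≤ C := (norm_nonneg _).trans (hC 0).1
  refine ⟨C * (C * C), fun N m ↦ ?_⟩
  unfold qBinom
  split_ifs
  · rw [div_eq_mul_inv, mul_inv, norm_mul, norm_mul]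
    gcongr
    exacts [(hC _).1, (hC _).2, (hC _).2]
  · rw [norm_zero]
    positivity

lemma norm_pow_mul_qBinom_le (hq : ‖q‖ < 1) {B : ℝ} (hB : ∀ N m, ‖qBinom q N m‖ ≤ B) (a N : ℕ)
    (m : ℤ) : ‖q ^ a * qBinom q N m‖ ≤ B := by
  rw [norm_mul, norm_pow]
  exact (mul_le_of_le_one_left (norm_nonneg _) (pow_le_one₀ (norm_nonneg q) hq.le)).trans (hB N m)

lemma tendsto_qBinom_atTop_const (hq : ‖q‖ < 1) (k : ℕ) :
    Tendsto (fun N ↦ qBinom q N k) atTop (𝓝 (qp q k)⁻¹) := by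
  rw [← tendsto_add_atTop_iff_nat k]
  have h := (tendsto_qp hq).comp (tendsto_add_atTop_nat k) |>.div
    (tendsto_const_nhds (x := qp q k) |>.mul (tendsto_qp hq))
    (mul_ne_zero (qp_ne_zero hq k) (qpinf_ne_zero hq))
  rw [mul_comm, ← div_div, div_self (qpinf_ne_zero hq), one_div] at h
  refine h.congr fun r ↦ ?_
  rw [add_comm r, qBinom_add, add_comm k]
  rfl

lemma tendsto_qBinom_half (hq : ‖q‖ < 1) (c : ℤ) :
    Tendsto (fun n : ℕ ↦ qBinom q n ((n + c) / 2)) atTop (𝓝 (qpinf q)⁻¹) := by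
  set a : ℕ → ℕ := fun n ↦ (((n : ℤ) + c) / 2).toNat
  have ha : Tendsto a atTop atTop := tendsto_atTop.2 fun b ↦ by
    filter_upwards [eventually_ge_atTop (2 * b + c.natAbs)] with n hn
    simp only [a]
    omega
  have hb : Tendsto (fun n ↦ n - a n) atTop atTop := tendsto_atTop.2 fun b ↦ by
    filter_upwards [eventually_ge_atTop (2 * b + c.natAbs + 1)] with n hn
    simp only [a]
    omega
  have h := (tendsto_qp hq).div (((tendsto_qp hq).comp ha).mul ((tendsto_qp hq).comp hb))
    (mul_ne_zero (qpinf_ne_zero hq) (qpinf_ne_zero hq))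
  rw [← div_div, div_self (qpinf_ne_zero hq), one_div] at h
  refine h.congr' ?_
  filter_upwards [eventually_ge_atTop c.natAbs] with n hn
  rw [qBinom, if_pos (by omega)]
  rfl

section Domination

variable {ι R : Type*} [NormedRing R] [CompleteSpace R] {w : ι → R} {B : ℝ}

lemma summable_mul_of_norm_le {g : ι → R} (hw : Summable (‖w ·‖)) (hg : ∀ i, ‖g i‖ ≤ B) :
    Summable fun i ↦ w i * g i :=
  (hw.mul_right B).of_norm_bounded fun i ↦
    (norm_mul_le _ _).trans (mul_le_mul_of_nonneg_left (hg i) (norm_nonneg _))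

lemma tendsto_tsum_mul_of_norm_le {g : ℕ → ι → R} {l : ι → R} (hw : Summable (‖w ·‖))
    (hg : ∀ n i, ‖g n i‖ ≤ B) (hl : ∀ i, Tendsto (g · i) atTop (𝓝 (l i))) :
    Tendsto (fun n ↦ ∑' i, w i * g n i) atTop (𝓝 (∑' i, w i * l i)) :=
  tendsto_tsum_of_dominated_convergence (hw.mul_right B) (fun i ↦ (hl i).const_mul (w i))
    (.of_forall fun n i ↦
      (norm_mul_le _ _).trans (mul_le_mul_of_nonneg_left (hg n i) (norm_nonneg _)))

end Domination

lemma summable_norm_pow_sq (hq : ‖q‖ < 1) : Summable fun k : ℕ ↦ ‖q ^ (k ^ 2)‖ :=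
  (summable_geometric_of_lt_one (norm_nonneg q) hq).of_nonneg_of_le (fun _ ↦ norm_nonneg _)
    fun k ↦ by
      rw [norm_pow]
      exact pow_le_pow_of_le_one (norm_nonneg q) hq.le (Nat.le_self_pow two_ne_zero k)

noncomputable def schurE (q : ℂ) (n : ℕ) : ℂ := ∑' k : ℕ, q ^ (k ^ 2) * qBinom q (n - k) k

lemma schurE_eq_one (hq : ‖q‖ < 1) {n : ℕ} (hn : n ≤ 1) : schurE q n = 1 := by
  rw [schurE, tsum_eq_single 0 fun k hk ↦ by rw [qBinom_of_lt (by omega), mul_zero]]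
  simp [qBinom_zero_right (qp_ne_zero hq)]

lemma schurE_add_two (hq : ‖q‖ < 1) (n : ℕ) :
    schurE q (n + 2) = schurE q (n + 1) + q ^ (n + 1) * schurE q n := by
  obtain ⟨B, hB⟩ := exists_norm_qBinom_le hq
  have hpascal (k : ℕ) : qBinom q (n + 2 - k) k = qBinom q (n + 1 - k) k +
      q ^ ((n + 1 - k : ℕ) + 1 - k : ℤ).toNat * qBinom q (n + 1 - k) (k - 1) := by
    rcases le_or_gt k (n + 1) with hk | hk
    · rw [show n + 2 - k = n + 1 - k + 1 by omega, qBinom_succ (qp_ne_zero hq)]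
    · rw [qBinom_of_lt (by omega), qBinom_of_lt (by omega), qBinom_of_lt (by omega), mul_zero,
        add_zero]
  have hshift (i : ℕ) :
      q ^ ((i + 1) ^ 2) * (q ^ ((n + 1 - (i + 1) : ℕ) + 1 - (i + 1 : ℕ) : ℤ).toNat *
        qBinom q (n + 1 - (i + 1)) ((i + 1 : ℕ) - 1)) =
      q ^ (n + 1) * (q ^ (i ^ 2) * qBinom q (n - i) i) := by
    have : (i + 1) ^ 2 = i ^ 2 + 2 * i + 1 := by ring
    rw [Nat.add_sub_add_right, Nat.cast_succ, add_sub_cancel_right, ← mul_assoc, ← pow_add,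
      pow_mul_qBinom_congr (b := n + 1 + i ^ 2) (by omega), pow_add, mul_assoc]
  have hsum := summable_mul_of_norm_le (summable_norm_pow_sq hq)
    fun k ↦ norm_pow_mul_qBinom_le hq hB ((n + 1 - k : ℕ) + 1 - k : ℤ).toNat (n + 1 - k) (k - 1)
  calc schurE q (n + 2)
      = ∑' k : ℕ, (q ^ (k ^ 2) * qBinom q (n + 1 - k) k + q ^ (k ^ 2) *
          (q ^ ((n + 1 - k : ℕ) + 1 - k : ℤ).toNat * qBinom q (n + 1 - k) (k - 1))) := by
        simp only [schurE, hpascal, mul_add]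
    _ = schurE q (n + 1) + q ^ (n + 1) * schurE q n := by
        rw [(summable_mul_of_norm_le (summable_norm_pow_sq hq) fun k ↦ hB _ _).tsum_add hsum,
          hsum.tsum_eq_zero_add, schurE, schurE, ← tsum_mul_left]
        simp only [hshift, qBinom_of_neg (show ((0 : ℕ) : ℤ) - 1 < 0 by omega), mul_zero, zero_add]

lemma tendsto_schurE (hq : ‖q‖ < 1) :
    Tendsto (schurE q) atTop (𝓝 (∑' k : ℕ, q ^ (k ^ 2) / qp q k)) := by
  obtain ⟨B, hB⟩ := exists_norm_qBinom_le hq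
  simp only [div_eq_mul_inv]
  exact tendsto_tsum_mul_of_norm_le (summable_norm_pow_sq hq) (fun _ _ ↦ hB _ _)
    fun k ↦ (tendsto_qBinom_atTop_const hq k).comp (tendsto_sub_atTop_nat k)

lemma summable_pow_natAbs {r : ℝ} (hr₀ : 0 ≤ r) (hr : r < 1) :
    Summable fun L : ℤ ↦ r ^ L.natAbs := by
  apply Summable.of_nat_of_neg <;>
    simpa only [Int.natAbs_neg, Int.natAbs_natCast] using summable_geometric_of_lt_one hr₀ hr

noncomputable def schurWeight (q : ℂ) (L : ℤ) : ℂ := (-1) ^ L * q ^ (L * (5 * L - 1) / 2)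

lemma two_mul_natAbs_le_mul_five_mul_sub_one (L : ℤ) : 2 * (L.natAbs : ℤ) ≤ L * (5 * L - 1) := by
  rcases lt_trichotomy L 0 with h | rfl | h
  · rw [Int.ofNat_natAbs_of_nonpos h.le]; nlinarith
  · simp
  · rw [Int.natAbs_of_nonneg h.le]; nlinarith

lemma schurWeight_eq (L : ℤ) : schurWeight q L = (-1) ^ L * q ^ (L * (5 * L - 1) / 2).toNat := by
  have := two_mul_natAbs_le_mul_five_mul_sub_one L
  rw [schurWeight, ← zpow_natCast, Int.toNat_of_nonneg (by omega)]

lemma norm_schurWeight_le (hq : ‖q‖ ≤ 1) (L : ℤ) : ‖schurWeight q L‖ ≤ ‖q‖ ^ L.natAbs := by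
  have := two_mul_natAbs_le_mul_five_mul_sub_one L
  rw [schurWeight_eq, norm_mul, norm_zpow, norm_neg, norm_one, one_zpow, one_mul, norm_pow]
  exact pow_le_pow_of_le_one (norm_nonneg q) hq (by omega)

lemma summable_norm_schurWeight (hq : ‖q‖ < 1) : Summable (‖schurWeight q ·‖) :=
  (summable_pow_natAbs (norm_nonneg q) hq).of_nonneg_of_le (fun _ ↦ norm_nonneg _)
    (norm_schurWeight_le hq.le)

lemma schurWeight_mul_pow {L : ℤ} {a b : ℕ} (h : (a : ℤ) + 5 * L - 3 = b) :
    schurWeight q L * q ^ a = -(schurWeight q (L - 1) * q ^ b) := by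
  have h₀ := two_mul_natAbs_le_mul_five_mul_sub_one L
  have h₁ := two_mul_natAbs_le_mul_five_mul_sub_one (L - 1)
  have h₂ : L * (5 * L - 1) = (L - 1) * (5 * (L - 1) - 1) + 2 * (5 * L - 3) := by ring
  rw [schurWeight_eq, schurWeight_eq, mul_assoc, mul_assoc, ← pow_add, ← pow_add,
    show (L * (5 * L - 1) / 2).toNat + a = ((L - 1) * (5 * (L - 1) - 1) / 2).toNat + b by omega,
    zpow_sub_one₀ (by norm_num)]
  ring

noncomputable def schurD (q : ℂ) (n : ℕ) : ℂ :=
  ∑' L : ℤ, schurWeight q L * qBinom q n ((n + 5 * L) / 2)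

lemma schurD_eq_one (hq : ‖q‖ < 1) {n : ℕ} (hn : n ≤ 1) : schurD q n = 1 := by
  rw [schurD, tsum_eq_single 0 fun L hL ↦ by
    rcases lt_or_gt_of_ne hL with hL | hL
    · rw [qBinom_of_neg (by omega), mul_zero]
    · rw [qBinom_of_lt (by omega), mul_zero]]
  rw [show ((n : ℤ) + 5 * 0) / 2 = 0 by omega, qBinom_zero_right (qp_ne_zero hq)]
  simp [schurWeight]

noncomputable def schurDTelescope (q : ℂ) (n : ℕ) (L : ℤ) : ℂ :=
  schurWeight q L * if Even ((n : ℤ) + 5 * L) then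
    q ^ (((n : ℤ) + 2 + 5 * L) / 2).toNat * qBinom q n ((n + 2 + 5 * L) / 2) else 0

lemma schurD_term_add_two (hq : ‖q‖ < 1) (n : ℕ) (L : ℤ) :
    schurWeight q L * qBinom q (n + 2) (((n + 2 : ℕ) + 5 * L) / 2) -
        schurWeight q L * qBinom q (n + 1) (((n + 1 : ℕ) + 5 * L) / 2) -
        q ^ (n + 1) * (schurWeight q L * qBinom q n ((n + 5 * L) / 2)) =
      schurDTelescope q n L - schurDTelescope q n (L - 1) := by
  have hq' := qp_ne_zero hq
  push_cast
  rcases Int.even_or_odd ((n : ℤ) + 5 * L) with ⟨m, hm⟩ | ⟨m, hm⟩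
  · rw [schurDTelescope, schurDTelescope, if_pos ⟨m, hm⟩,
      if_neg (show ¬Even ((n : ℤ) + 5 * (L - 1)) from Int.not_even_iff_odd.2 ⟨m - 3, by omega⟩),
      show ((n : ℤ) + 2 + 5 * L) / 2 = m + 1 by omega, show ((n : ℤ) + 1 + 5 * L) / 2 = m by omega,
      show ((n : ℤ) + 5 * L) / 2 = m by omega, qBinom_add_two hq']
    ring
  · rw [schurDTelescope, schurDTelescope, if_neg (Int.not_even_iff_odd.2 ⟨m, hm⟩),
      if_pos (show Even ((n : ℤ) + 5 * (L - 1)) from ⟨m - 2, by omega⟩),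
      show ((n : ℤ) + 2 + 5 * L) / 2 = m + 1 by omega,
      show ((n : ℤ) + 1 + 5 * L) / 2 = m + 1 by omega, show ((n : ℤ) + 5 * L) / 2 = m by omega,
      show ((n : ℤ) + 2 + 5 * (L - 1)) / 2 = m - 1 by omega, qBinom_add_two' hq']
    by_cases hsupp : 0 ≤ m - 1 ∧ m - 1 ≤ n
    · have := schurWeight_mul_pow (q := q) (L := L) (a := ((n : ℤ) + 1 - m).toNat)
        (b := (m - 1).toNat) (by omega)
      linear_combination qBinom q n (m - 1) * this
    · rw [show qBinom q n (m - 1) = 0 from if_neg hsupp]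
      ring

lemma schurD_add_two (hq : ‖q‖ < 1) (n : ℕ) :
    schurD q (n + 2) = schurD q (n + 1) + q ^ (n + 1) * schurD q n := by
  obtain ⟨B, hB⟩ := exists_norm_qBinom_le hq
  have hw := summable_norm_schurWeight hq
  have hT (N : ℕ) : Summable fun L ↦ schurWeight q L * qBinom q N ((N + 5 * L) / 2) :=
    summable_mul_of_norm_le hw fun L ↦ hB _ _
  have hS : Summable (schurDTelescope q n) := summable_mul_of_norm_le hw fun L ↦ by
    split_ifs
    · exact norm_pow_mul_qBinom_le hq hB _ _ _
    · simpa using (norm_nonneg _).trans (hB 0 0)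
  have key : schurD q (n + 2) - schurD q (n + 1) - q ^ (n + 1) * schurD q n = 0 := by
    rw [schurD, schurD, schurD, ← tsum_mul_left, ← (hT _).tsum_sub (hT _),
      ← ((hT _).sub (hT _)).tsum_sub ((hT n).mul_left _)]
    simp only [schurD_term_add_two hq n]
    have hS' : Summable fun L ↦ schurDTelescope q n (L - 1) :=
      hS.comp_injective sub_left_injective
    rw [hS.tsum_sub hS']
    exact sub_eq_zero.2 ((Equiv.subRight 1).tsum_eq _).symm
  linear_combination key

lemma tendsto_schurD (hq : ‖q‖ < 1) :
    Tendsto (schurD q) atTop (𝓝 ((∑' L : ℤ, schurWeight q L) * (qpinf q)⁻¹)) := by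
  obtain ⟨B, hB⟩ := exists_norm_qBinom_le hq
  rw [← tsum_mul_right]
  exact tendsto_tsum_mul_of_norm_le (summable_norm_schurWeight hq) (fun _ _ ↦ hB _ _)
    fun L ↦ tendsto_qBinom_half hq (5 * L)

lemma schurE_eq_schurD (hq : ‖q‖ < 1) (n : ℕ) : schurE q n = schurD q n := by
  induction n using Nat.twoStepInduction with
  | zero => rw [schurE_eq_one hq zero_le_one, schurD_eq_one hq zero_le_one]
  | one => rw [schurE_eq_one hq le_rfl, schurD_eq_one hq le_rfl]
  | more n h₀ h₁ => rw [schurE_add_two hq, schurD_add_two hq, h₀, h₁]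

/-- the bilateral-series form of the first Rogers–Ramanujan identity obtained
from the Bailey transform. -/
theorem bilateral_rogers_ramanujan (q : ℂ) (hq : ‖q‖ < 1) :
    (1 / qpinf q) * ∑' L : ℤ, (-1 : ℂ) ^ L * q ^ ((L * (5 * L - 1)) / 2) =
      ∑' n : ℕ, q ^ (n ^ 2) / qp q n := by
  have hD := tendsto_schurD hq
  rw [← funext (schurE_eq_schurD hq)] at hD
  rw [one_div, mul_comm]
  exact tendsto_nhds_unique hD (tendsto_schurE hq)
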